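/- Let M be a d×d symmetric real matrix with ‖M‖ > 0, Ŝ a d×d real matrix, and let Ω be the circle {z ∈ ℂ : |z| = (2‖M‖)⁻¹}. Then for any x ∈ ℝ^d, xᵀ(ŜM + MŜ)x/2 = (1/(4πi)) ∮_Ω xᵀ (I − zM)⁻¹ Ŝ (I − zM)⁻¹ x · z⁻² dz. -/

import Mathlib

open Matrix

/-- A real rectangular matrix regarded as a complex matrix. -/
noncomputable def cmplx {n d : ℕ} (A : Matrix (Fin n) (Fin d) ℝ) : Matrix (Fin n) (Fin d) ℂ :=
  A.map Complex.ofReal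

/-- The ℓ²→ℓ² (spectral) operator norm of a complex square matrix. -/
noncomputable def opNorm {m : ℕ} (A : Matrix (Fin m) (Fin m) ℂ) : ℝ :=
  ‖Matrix.toEuclideanCLM (𝕜 := ℂ) A‖

lemma expand_aux {d : ℕ} (Mc Sc B : Matrix (Fin d) (Fin d) ℂ) (z : ℂ)
    (hB1 : B = 1 + z • (Mc * B)) (hB2 : B = 1 + z • (B * Mc)) :
    B * Sc * B = Sc + z • (Mc * Sc + Sc * Mc) +
      z ^ 2 • (Mc * (Mc * (B * Sc)) + Mc * (Sc * Mc) + Sc * (B * (Mc * Mc)) +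
        z • (Mc * (Mc * (B * (Sc * Mc))) + Mc * (Sc * (B * (Mc * Mc)))) +
        (z ^ 2) • (Mc * (Mc * (B * (Sc * (B * (Mc * Mc))))))) := by
  nth_rewrite 1 [hB1]
  nth_rewrite 2 [hB2]
  nth_rewrite 2 [hB2]
  nth_rewrite 1 [hB1]
  simp only [add_mul, mul_add, one_mul, mul_one, smul_mul_assoc, mul_smul_comm, smul_smul,
    smul_add, mul_assoc]
  module

/-- The quadratic form `N ↦ xᵀ N x` as a linear map on matrices. -/
noncomputable def quadLM {d : ℕ} (xc : Fin d → ℂ) : Matrix (Fin d) (Fin d) ℂ →ₗ[ℂ] ℂ where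
  toFun N := xc ⬝ᵥ N.mulVec xc
  map_add' N P := by simp [Matrix.add_mulVec, dotProduct_add]
  map_smul' c N := by simp [Matrix.smul_mulVec, dotProduct_smul]

lemma circleIntegral_add {f g : ℂ → ℂ} {c : ℂ} {R : ℝ} (hf : CircleIntegrable f c R)
    (hg : CircleIntegrable g c R) :
    (∮ z in C(c, R), (f z + g z)) = (∮ z in C(c, R), f z) + ∮ z in C(c, R), g z := by
  simp only [circleIntegral, smul_add, intervalIntegral.integral_add hf.out hg.out]

open scoped Matrix.Norms.L2Operator in
/-- Cauchy's integral formula for the quadratic form: for any `x`,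
`xᵀ(ŜM + MŜ)x = (1/(2πi)) ∮_{|z|=(2‖M‖)⁻¹} z⁻² xᵀ(I - zM)⁻¹ Ŝ (I - zM)⁻¹ x dz`. -/
theorem quadratic_form_contour_integral {d : ℕ} (M S : Matrix (Fin d) (Fin d) ℝ)
    (hM : M.IsSymm) (hMpos : 0 < opNorm (cmplx M)) (x : Fin d → ℝ) :
    (fun i => ((x i : ℝ) : ℂ)) ⬝ᵥ
        ((cmplx S * cmplx M + cmplx M * cmplx S).mulVec fun i => ((x i : ℝ) : ℂ)) =
      (2 * (Real.pi : ℂ) * Complex.I)⁻¹ *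
        circleIntegral
          (fun z => z⁻¹ ^ 2 *
            ((fun i => ((x i : ℝ) : ℂ)) ⬝ᵥ
              (((1 - z • cmplx M)⁻¹ * cmplx S * (1 - z • cmplx M)⁻¹).mulVec
                fun i => ((x i : ℝ) : ℂ))))
          0 ((2 * opNorm (cmplx M))⁻¹) := by
  classical
  set Mc : Matrix (Fin d) (Fin d) ℂ := cmplx M with hMcdef
  set Sc : Matrix (Fin d) (Fin d) ℂ := cmplx S with hScdef
  set xc : Fin d → ℂ := fun i => ((x i : ℝ) : ℂ) with hxcdef
  have hop : opNorm Mc = ‖Mc‖ := rfl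
  rw [hop] at hMpos ⊢
  set r : ℝ := (2 * ‖Mc‖)⁻¹ with hrdef
  have hr0 : 0 < r := by positivity
  set B : ℂ → Matrix (Fin d) (Fin d) ℂ := fun z => (1 - z • Mc)⁻¹ with hBdef
  -- units on the closed ball
  have hUnit : ∀ z ∈ Metric.closedBall (0 : ℂ) r, IsUnit (1 - z • Mc) := by
    intro z hz
    have hz' : ‖z‖ ≤ r := by simpa [Metric.mem_closedBall] using hz
    have hn : ‖z • Mc‖ < 1 := by
      rw [norm_smul]
      calc ‖z‖ * ‖Mc‖ ≤ r * ‖Mc‖ := by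
            exact mul_le_mul_of_nonneg_right hz' (norm_nonneg _)
        _ = 2⁻¹ := by rw [hrdef, mul_inv, mul_assoc, inv_mul_cancel₀ hMpos.ne', mul_one]
        _ < 1 := by norm_num
    exact (Units.oneSub _ hn).isUnit
  -- the two Neumann-type identities
  have hB1 : ∀ z ∈ Metric.closedBall (0 : ℂ) r, B z = 1 + z • (Mc * B z) := by
    intro z hz
    have h := Matrix.mul_nonsing_inv _ ((Matrix.isUnit_iff_isUnit_det _).mp (hUnit z hz))
    have h' : B z - z • (Mc * B z) = 1 := by
      simpa [hBdef, sub_mul, smul_mul_assoc] using h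
    exact sub_eq_iff_eq_add.mp h'
  have hB2 : ∀ z ∈ Metric.closedBall (0 : ℂ) r, B z = 1 + z • (B z * Mc) := by
    intro z hz
    have h := Matrix.nonsing_inv_mul _ ((Matrix.isUnit_iff_isUnit_det _).mp (hUnit z hz))
    have h' : B z - z • (B z * Mc) = 1 := by
      simpa [hBdef, mul_sub, mul_smul_comm] using h
    exact sub_eq_iff_eq_add.mp h'
  -- differentiability of B on the closed ball
  have hBd : DifferentiableOn ℂ B (Metric.closedBall (0 : ℂ) r) := by
    have : B = fun z => Ring.inverse (1 - z • Mc) := by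
      funext z; rw [hBdef]; exact Matrix.nonsing_inv_eq_ringInverse _
    rw [this]
    exact DifferentiableOn.inverse
      ((differentiableOn_const _).sub (differentiable_id.smul_const Mc).differentiableOn) hUnit
  -- the higher-order remainder
  set G : ℂ → Matrix (Fin d) (Fin d) ℂ := fun z =>
    Mc * (Mc * (B z * Sc)) + Mc * (Sc * Mc) + Sc * (B z * (Mc * Mc)) +
      z • (Mc * (Mc * (B z * (Sc * Mc))) + Mc * (Sc * (B z * (Mc * Mc)))) +
      (z ^ 2) • (Mc * (Mc * (B z * (Sc * (B z * (Mc * Mc)))))) with hGdef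
  have hGd : DifferentiableOn ℂ G (Metric.closedBall (0 : ℂ) r) := by
    apply DifferentiableOn.add
    apply DifferentiableOn.add
    apply DifferentiableOn.add
    apply DifferentiableOn.add
    · exact (hBd.mul (differentiableOn_const _)).const_mul _ |>.const_mul _
    · exact differentiableOn_const _
    · exact (differentiableOn_const _).mul (hBd.mul (differentiableOn_const _))
    · exact (differentiable_id.differentiableOn).smul
        (((hBd.mul (differentiableOn_const _)).const_mul _ |>.const_mul _).add
          (((hBd.mul (differentiableOn_const _)).const_mul _).const_mul _))
    · exact ((differentiable_id.pow 2).differentiableOn).smul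
        ((hBd.mul ((differentiableOn_const _).mul
          (hBd.mul (differentiableOn_const _)))).const_mul _ |>.const_mul _)
  -- scalarize
  set L : Matrix (Fin d) (Fin d) ℂ →L[ℂ] ℂ := LinearMap.toContinuousLinearMap (quadLM xc) with hLdef
  have hLapp : ∀ N, L N = xc ⬝ᵥ N.mulVec xc := fun N => rfl
  set g : ℂ → ℂ := fun z => L (G z) with hgdef
  have hgd : DifferentiableOn ℂ g (Metric.closedBall (0 : ℂ) r) :=
    L.differentiable.comp_differentiableOn hGd
  set c0 : ℂ := L Sc with hc0
  set c1 : ℂ := L (Mc * Sc + Sc * Mc) with hc1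
  -- the integrand agrees on the sphere with an explicit Laurent expansion
  have hsphere : Set.EqOn
      (fun z => z⁻¹ ^ 2 * (xc ⬝ᵥ ((1 - z • Mc)⁻¹ * Sc * (1 - z • Mc)⁻¹).mulVec xc))
      (fun z => c0 * z⁻¹ ^ 2 + c1 * z⁻¹ + g z) (Metric.sphere (0 : ℂ) r) := by
    intro z hz
    have hzc : z ∈ Metric.closedBall (0 : ℂ) r := Metric.sphere_subset_closedBall hz
    have hzr : ‖z‖ = r := by simpa using hz
    have hzn : z ≠ 0 := by
      intro h
      rw [h] at hzr
      simp at hzr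
      exact hr0.ne' hzr.symm
    have hkey := expand_aux Mc Sc (B z) z (hB1 z hzc) (hB2 z hzc)
    have hL : L (B z * Sc * B z) = c0 + z * c1 + z ^ 2 * g z := by
      rw [hkey, map_add, map_add, _root_.map_smul, _root_.map_smul]
      simp only [smul_eq_mul]
      rfl
    show z⁻¹ ^ 2 * L (B z * Sc * B z) = _
    rw [hL]
    field_simp
  -- circle integrability of the three pieces
  have hne : ∀ z ∈ Metric.sphere (0 : ℂ) r, z ≠ 0 := by
    intro z hz h
    have hzr : ‖z‖ = r := by simpa using hz
    rw [h] at hzr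
    simp at hzr
    exact hr0.ne' hzr.symm
  have hi1 : CircleIntegrable (fun z => c0 * z⁻¹ ^ 2) 0 r := by
    apply ContinuousOn.circleIntegrable hr0.le
    exact continuousOn_const.mul (((continuousOn_id.inv₀ hne)).pow 2)
  have hi2 : CircleIntegrable (fun z => c1 * z⁻¹) 0 r := by
    apply ContinuousOn.circleIntegrable hr0.le
    exact continuousOn_const.mul (continuousOn_id.inv₀ hne)
  have hi3 : CircleIntegrable g 0 r := by
    apply ContinuousOn.circleIntegrable hr0.le
    exact (hgd.continuousOn).mono Metric.sphere_subset_closedBall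
  -- compute the three integrals
  have hint1 : (∮ z in C(0, r), c0 * z⁻¹ ^ 2) = 0 := by
    have : (fun z : ℂ => c0 * z⁻¹ ^ 2) = fun z => c0 * (z - 0) ^ (-2 : ℤ) := by
      funext z
      rw [sub_zero, _root_.zpow_neg, inv_pow]
      norm_num
    rw [this, circleIntegral.integral_const_mul,
      circleIntegral.integral_sub_zpow_of_ne (by decide) 0 0 r, mul_zero]
  have hint2 : (∮ z in C(0, r), c1 * z⁻¹) = c1 * (2 * Real.pi * Complex.I) := by
    have : (fun z : ℂ => c1 * z⁻¹) = fun z => c1 * (z - 0)⁻¹ := by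
      funext z; rw [sub_zero]
    rw [this, circleIntegral.integral_const_mul,
      circleIntegral.integral_sub_center_inv 0 hr0.ne']
  have hint3 : (∮ z in C(0, r), g z) = 0 := by
    apply Complex.circleIntegral_eq_zero_of_differentiable_on_off_countable hr0.le
      Set.countable_empty (hgd.continuousOn)
    rintro z ⟨hz, -⟩
    exact (hgd z (Metric.ball_subset_closedBall hz)).differentiableAt
      (Filter.mem_of_superset (Metric.isOpen_ball.mem_nhds hz) Metric.ball_subset_closedBall)
  -- put everything together
  rw [circleIntegral.integral_congr hr0.le hsphere]
  have hi12 : CircleIntegrable (fun z => c0 * z⁻¹ ^ 2 + c1 * z⁻¹) 0 r := hi1.add hi2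
  have hsplit : (∮ z in C(0, r), (c0 * z⁻¹ ^ 2 + c1 * z⁻¹ + g z))
      = (∮ z in C(0, r), (c0 * z⁻¹ ^ 2 + c1 * z⁻¹)) + ∮ z in C(0, r), g z :=
    circleIntegral_add hi12 hi3
  have hsplit2 : (∮ z in C(0, r), (c0 * z⁻¹ ^ 2 + c1 * z⁻¹))
      = (∮ z in C(0, r), c0 * z⁻¹ ^ 2) + ∮ z in C(0, r), c1 * z⁻¹ :=
    circleIntegral_add hi1 hi2
  rw [hsplit, hsplit2, hint1, hint2, hint3]
  have hπ : (2 * (Real.pi : ℂ) * Complex.I) ≠ 0 := by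
    simp [Real.pi_ne_zero, Complex.I_ne_zero, Complex.ofReal_ne_zero]
  have : xc ⬝ᵥ ((Sc * Mc + Mc * Sc).mulVec xc) = c1 := by
    rw [hc1, hLapp, add_comm (Mc * Sc)]
  rw [this]
  field_simp
  ring
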